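/- arXiv:2201.09065 — 2 statements merged into one kernel-verified Lean document; each statement's English description precedes it below -/
import Mathlib

section
/- Let (X, d) be a metric space, let K ⊆ X be a compact subset, let (s_t)_{t∈ℕ} be an arbitrary sequence of points of K, and let μ₁ > 0. Define the dictionary sequence (D_t)_{t∈ℕ} of subsets of K recursively by D_0 = {s_0} and D_{t+1} = D_t if min_{x∈D_t} d(x, s_{t+1})² ≤ μ₁, and D_{t+1} = D_t ∪ {s_{t+1}} otherwise. Then the union ⋃_{t∈ℕ} D_t is a finite set, and the sequence (D_t) is eventually constant: there exists T ∈ ℕ such that D_t = D_T for all t ≥ T. -/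
/-!
Every dictionary element was admitted at squared distance more than `μ₁` from all earlier ones,
so the union of the dictionaries is a `√μ₁`-separated subset of the totally bounded set `K`,
hence finite. A nondecreasing sequence of finite sets with finite union stabilizes.
-/

open scoped Classical

open Set

theorem Metric.IsSeparated.finite_of_totallyBounded {X : Type*} [PseudoEMetricSpace X]
    {K S : Set X} {ε : ENNReal} (hK : TotallyBounded K) (hSK : S ⊆ K) (hε : 0 < ε)
    (hS : Metric.IsSeparated ε S) : S.Finite := by
  obtain ⟨c, hc, hKc⟩ := EMetric.totallyBounded_iff.1 hK (ε / 2) (ENNReal.half_pos hε.ne')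
  have hcell : ∀ y ∈ c, (S ∩ Metric.eball y (ε / 2)).Subsingleton := by
    rintro y - x ⟨hxS, hx⟩ z ⟨hzS, hz⟩
    by_contra hxz
    have hclose : edist x z < ε :=
      calc edist x z ≤ edist x y + edist y z := edist_triangle x y z
        _ < ε / 2 + ε / 2 := ENNReal.add_lt_add (Metric.mem_eball.1 hx) (Metric.mem_eball'.1 hz)
        _ = ε := ENNReal.add_halves ε
    exact (hS hxS hzS hxz).not_gt hclose
  refine (hc.biUnion fun y hy => (hcell y hy).finite).subset fun x hx => ?_
  obtain ⟨y, hy, hxy⟩ := mem_iUnion₂.1 (hKc (hSK hx))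
  exact mem_iUnion₂.2 ⟨y, hy, hx, hxy⟩

theorem Monotone.exists_forall_ge_eq_of_finite_iUnion {ι α : Type*} [Preorder ι]
    [IsDirectedOrder ι] [Nonempty ι] {D : ι → Finset α} (hD : Monotone D)
    (hfin : (⋃ t, (D t : Set α)).Finite) : ∃ T, ∀ t ≥ T, D t = D T := by
  obtain ⟨T, hT⟩ := (hD.directed_le.mono_comp (· ⊆ ·) fun _ _ => Finset.coe_subset.2)
    |>.exists_mem_subset_of_finset_subset_biUnion hfin.coe_toFinset.subset
  refine ⟨T, fun t ht => le_antisymm ?_ (hD ht)⟩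
  rw [← Finset.coe_subset]
  exact (subset_iUnion (fun t => (D t : Set α)) t).trans (hfin.coe_toFinset ▸ hT)

section Dictionary

variable {X : Type*} [MetricSpace X]

noncomputable def mncUpdate (μ₁ : ℝ) (x : X) (Dt : Finset X) : Finset X :=
  if ∃ y ∈ Dt, dist y x ^ 2 ≤ μ₁ then Dt else insert x Dt

theorem subset_mncUpdate (μ₁ : ℝ) (x : X) (Dt : Finset X) : Dt ⊆ mncUpdate μ₁ x Dt := by
  unfold mncUpdate
  split_ifs
  · exact subset_rfl
  · exact Finset.subset_insert x Dt

theorem mncUpdate_subset_insert (μ₁ : ℝ) (x : X) (Dt : Finset X) :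
    mncUpdate μ₁ x Dt ⊆ insert x Dt := by
  unfold mncUpdate
  split_ifs
  · exact Finset.subset_insert x Dt
  · exact subset_rfl

theorem Set.Pairwise.mncUpdate {μ₁ : ℝ} {x : X} {Dt : Finset X}
    (h : (Dt : Set X).Pairwise fun y z => μ₁ < dist y z ^ 2) :
    (mncUpdate μ₁ x Dt : Set X).Pairwise fun y z => μ₁ < dist y z ^ 2 := by
  unfold _root_.mncUpdate
  split_ifs with hnear
  · exact h
  · push Not at hnear
    rw [Finset.coe_insert]
    exact h.insert fun y hy _ => ⟨dist_comm y x ▸ hnear y hy, hnear y hy⟩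

variable {s : ℕ → X} {μ₁ : ℝ} {D : ℕ → Finset X}

theorem dictionary_monotone (hDrec : ∀ t, D (t + 1) = mncUpdate μ₁ (s (t + 1)) (D t)) :
    Monotone D :=
  monotone_nat_of_le_succ fun t => hDrec t ▸ subset_mncUpdate μ₁ (s (t + 1)) (D t)

theorem dictionary_subset_range (hD0 : D 0 = {s 0})
    (hDrec : ∀ t, D (t + 1) = mncUpdate μ₁ (s (t + 1)) (D t)) (t : ℕ) :
    (D t : Set X) ⊆ range s := by
  induction t with
  | zero => simp [hD0]
  | succ t ih =>
    rw [hDrec t]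
    refine (Finset.coe_subset.2 (mncUpdate_subset_insert μ₁ _ _)).trans ?_
    rw [Finset.coe_insert]
    exact insert_subset (mem_range_self _) ih

theorem dictionary_pairwise_sq_dist_gt (hD0 : D 0 = {s 0})
    (hDrec : ∀ t, D (t + 1) = mncUpdate μ₁ (s (t + 1)) (D t)) (t : ℕ) :
    (D t : Set X).Pairwise fun x y => μ₁ < dist x y ^ 2 := by
  induction t with
  | zero => simp [hD0]
  | succ t ih => exact hDrec t ▸ ih.mncUpdate

theorem dictionary_iUnion_isSeparated (hD0 : D 0 = {s 0})
    (hDrec : ∀ t, D (t + 1) = mncUpdate μ₁ (s (t + 1)) (D t)) :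
    Metric.IsSeparated (ENNReal.ofReal √μ₁) (⋃ t, (D t : Set X)) := by
  have hpair := (pairwise_iUnion ((dictionary_monotone hDrec).directed_le.mono_comp (· ⊆ ·)
    fun _ _ => Finset.coe_subset.2)).2 (dictionary_pairwise_sq_dist_gt hD0 hDrec)
  intro x hx y hy hxy
  have hdist : 0 < dist x y := dist_pos.2 hxy
  rw [edist_dist, ENNReal.ofReal_lt_ofReal_iff hdist, Real.sqrt_lt' hdist]
  exact hpair hx hy hxy

end Dictionary

/-- Modified Novelty Criterion dictionary construction over a compact sample set:
the union of all dictionaries is finite and the dictionary sequence is eventually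
constant. -/
theorem mnc_dictionary_finite_and_eventually_constant
    {X : Type*} [MetricSpace X] {K : Set X} (hK : IsCompact K)
    (s : ℕ → X) (hs : ∀ t, s t ∈ K)
    (μ₁ : ℝ) (hμ₁ : 0 < μ₁)
    (D : ℕ → Finset X)
    (hD0 : D 0 = {s 0})
    (hDrec : ∀ t, D (t + 1) =
      if ∃ x ∈ D t, dist x (s (t + 1)) ^ 2 ≤ μ₁ then D t
      else insert (s (t + 1)) (D t)) :
    (⋃ t, (D t : Set X)).Finite ∧ ∃ T, ∀ t ≥ T, D t = D T := by
  have hsubK : (⋃ t, (D t : Set X)) ⊆ K :=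
    iUnion_subset fun t => (dictionary_subset_range hD0 hDrec t).trans (range_subset_iff.2 hs)
  have hfin : (⋃ t, (D t : Set X)).Finite :=
    (dictionary_iUnion_isSeparated hD0 hDrec).finite_of_totallyBounded hK.totallyBounded hsubK
      (ENNReal.ofReal_pos.2 (Real.sqrt_pos.2 hμ₁))
  exact ⟨hfin, (dictionary_monotone hDrec).exists_forall_ge_eq_of_finite_iUnion hfin⟩
end

section
/- Let σ > 0 and 0 < μ₁ < 2, let K be a compact subset of the Euclidean space ℝ^n, and let (s_t)_{t∈ℕ} be an arbitrary sequence of points of K. Define the dictionary sequence (D_t)_{t∈ℕ} recursively by D_0 = {s_0} and D_{t+1} = D_t if min_{x∈D_t} (2 − 2·exp(−‖x − s_{t+1}‖²/(2σ²))) ≤ μ₁, and D_{t+1} = D_t ∪ {s_{t+1}} otherwise. Then the union ⋃_{t∈ℕ} D_t is a finite set and there exists T ∈ ℕ such that D_t = D_T for all t ≥ T. -/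
/-!
The Gaussian feature distance `2 - 2 * exp (-r ^ 2 / (2 * σ ^ 2))` is continuous in `r` and
vanishes at `r = 0`, so below some radius `ε > 0` a new sample is always rejected as redundant.
Hence all dictionaries, and their union, are `ε`-separated subsets of the compact set `K`; such a
set is finite because its cardinality is bounded by a covering number of `K`. A monotone sequence
of subsets of a finite set is eventually constant.
-/

open Set Metric
open scoped NNReal ENNReal

theorem Metric.IsSeparated.finite_of_totallyBounded_s4 {X : Type*} [PseudoEMetricSpace X]
    {ε : ℝ≥0} {A C : Set X} (hε : ε ≠ 0) (hA : TotallyBounded A) (hCA : C ⊆ A)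
    (hC : IsSeparated ε C) : C.Finite := by
  obtain ⟨N, -, hN, hcover⟩ :=
    exists_finite_isCover_of_totallyBounded (ε := ε / 2) (by simpa using hε) hA
  have : C.encard < ⊤ :=
    calc C.encard ≤ packingNumber (2 * (ε / 2)) A := by
          rw [mul_div_cancel₀ _ two_ne_zero]; exact hC.encard_le_packingNumber hCA
      _ ≤ externalCoveringNumber (ε / 2) A := packingNumber_two_mul_le_externalCoveringNumber _ _
      _ ≤ N.encard := hcover.externalCoveringNumber_le_encard
      _ < ⊤ := hN.encard_lt_top
  exact Set.encard_lt_top_iff.mp this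

theorem Monotone.exists_forall_ge_eq_of_finite_range {ι β : Type*} [Preorder ι] [Nonempty ι]
    [PartialOrder β] {f : ι → β} (hf : Monotone f) (hr : (range f).Finite) :
    ∃ T, ∀ t ≥ T, f t = f T := by
  obtain ⟨_, ⟨T, rfl⟩, hmax⟩ := hr.exists_maximal (range_nonempty f)
  exact ⟨T, fun t ht => le_antisymm (hmax ⟨t, rfl⟩ (hf ht)) (hf ht)⟩

theorem exists_edist_le_gaussian_feature_dist_le {E : Type*} [SeminormedAddCommGroup E]
    (σ : ℝ) {μ : ℝ} (hμ : 0 < μ) :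
    ∃ ε : ℝ≥0, ε ≠ 0 ∧ ∀ x y : E, edist x y ≤ ε →
      2 - 2 * Real.exp (-‖x - y‖ ^ 2 / (2 * σ ^ 2)) ≤ μ := by
  have hcont : Continuous fun r : ℝ => 2 - 2 * Real.exp (-r ^ 2 / (2 * σ ^ 2)) := by fun_prop
  have hnear : ∀ᶠ r in nhds (0 : ℝ), 2 - 2 * Real.exp (-r ^ 2 / (2 * σ ^ 2)) < μ :=
    hcont.continuousAt.eventually_lt continuousAt_const (by simpa using hμ)
  obtain ⟨δ, hδ, hδμ⟩ := Metric.eventually_nhds_iff.mp hnear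
  refine ⟨(δ / 2).toNNReal, by simpa using hδ, fun x y hxy => (hδμ ?_).le⟩
  have : dist x y ≤ δ / 2 := (edist_le_ofReal (by positivity)).mp hxy
  rw [Real.dist_0_eq_abs, abs_norm, ← dist_eq_norm]
  linarith

section NoveltyDictionary

variable {α : Type*} [DecidableEq α] {close : α → α → Prop} [DecidableRel close] {s : ℕ → α}
  {D : ℕ → Finset α}

theorem novelty_dictionary_monotone
    (hD : ∀ t, D (t + 1) =
      if ∃ x ∈ D t, close x (s (t + 1)) then D t else insert (s (t + 1)) (D t)) :
    Monotone D := by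
  refine monotone_nat_of_le_succ fun t => ?_
  rw [hD t]
  split_ifs
  exacts [le_rfl, Finset.subset_insert _ _]

theorem novelty_dictionary_subset_range (hD0 : D 0 = {s 0})
    (hD : ∀ t, D (t + 1) =
      if ∃ x ∈ D t, close x (s (t + 1)) then D t else insert (s (t + 1)) (D t))
    (t : ℕ) : (D t : Set α) ⊆ range s := by
  induction t with
  | zero => simp [hD0]
  | succ t ih =>
    rw [hD t]
    split_ifs
    · exact ih
    · simpa [insert_subset_iff] using ih

theorem isSeparated_novelty_dictionary [PseudoEMetricSpace α] {ε : ℝ≥0∞}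
    (hclose : ∀ x y, edist x y ≤ ε → close x y) (hD0 : D 0 = {s 0})
    (hD : ∀ t, D (t + 1) =
      if ∃ x ∈ D t, close x (s (t + 1)) then D t else insert (s (t + 1)) (D t))
    (t : ℕ) : IsSeparated ε (D t : Set α) := by
  induction t with
  | zero => simp [hD0]
  | succ t ih =>
    rw [hD t]
    split_ifs with hnovel
    · exact ih
    · rw [Finset.coe_insert]
      refine ih.insert fun y hy _ => ?_
      rw [edist_comm]
      exact lt_of_not_ge fun hle => hnovel ⟨y, hy, hclose _ _ hle⟩

theorem novelty_dictionary_finite_and_eventually_constant [PseudoEMetricSpace α] {ε : ℝ≥0}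
    (hε : ε ≠ 0) (hclose : ∀ x y, edist x y ≤ ε → close x y) {K : Set α} (hK : TotallyBounded K)
    (hs : ∀ t, s t ∈ K) (hD0 : D 0 = {s 0})
    (hD : ∀ t, D (t + 1) =
      if ∃ x ∈ D t, close x (s (t + 1)) then D t else insert (s (t + 1)) (D t)) :
    (⋃ t, (D t : Set α)).Finite ∧ ∃ T, ∀ t ≥ T, D t = D T := by
  have hmono : Monotone fun t => (D t : Set α) :=
    fun _ _ hle => Finset.coe_subset.mpr (novelty_dictionary_monotone hD hle)
  have hsep : IsSeparated ε (⋃ t, (D t : Set α)) :=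
    (pairwise_iUnion hmono.directed_le).mpr (isSeparated_novelty_dictionary hclose hD0 hD)
  have hsubK : (⋃ t, (D t : Set α)) ⊆ K :=
    iUnion_subset fun t =>
      (novelty_dictionary_subset_range hD0 hD t).trans (range_subset_iff.mpr hs)
  have hfin := hsep.finite_of_totallyBounded_s4 hε hK hsubK
  refine ⟨hfin, ?_⟩
  have hrange : (range fun t => (D t : Set α)).Finite :=
    hfin.finite_subsets.subset <| range_subset_iff.mpr fun t =>
      subset_iUnion (fun t => (D t : Set α)) t
  obtain ⟨T, hT⟩ := hmono.exists_forall_ge_eq_of_finite_range hrange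
  exact ⟨T, fun t ht => Finset.coe_inj.mp (hT t ht)⟩

end NoveltyDictionary

theorem mnc_gaussian_dictionary_finite_and_eventually_constant_general
    {n : ℕ} (σ μ₁ : ℝ) (hμ₁ : 0 < μ₁)
    {K : Set (EuclideanSpace ℝ (Fin n))} (hK : IsCompact K)
    (s : ℕ → EuclideanSpace ℝ (Fin n)) (hs : ∀ t, s t ∈ K)
    (D : ℕ → Finset (EuclideanSpace ℝ (Fin n)))
    (hD0 : D 0 = {s 0})
    (hDrec : ∀ t, D (t + 1) =
      if ∃ x ∈ D t, 2 - 2 * Real.exp (-‖x - s (t + 1)‖ ^ 2 / (2 * σ ^ 2)) ≤ μ₁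
      then D t
      else insert (s (t + 1)) (D t)) :
    (⋃ t, (D t : Set (EuclideanSpace ℝ (Fin n)))).Finite ∧
      ∃ T, ∀ t ≥ T, D t = D T := by
  obtain ⟨ε, hε, hclose⟩ :=
    exists_edist_le_gaussian_feature_dist_le (E := EuclideanSpace ℝ (Fin n)) σ hμ₁
  exact novelty_dictionary_finite_and_eventually_constant
    (close := fun x y => 2 - 2 * Real.exp (-‖x - y‖ ^ 2 / (2 * σ ^ 2)) ≤ μ₁)
    hε hclose hK.totallyBounded hs hD0 hDrec

/-- Modified Novelty Criterion dictionary construction with the Gaussian kernel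
on a compact subset of Euclidean space: the union of all dictionaries is finite
and the dictionary sequence is eventually constant. -/
theorem mnc_gaussian_dictionary_finite_and_eventually_constant
    {n : ℕ} (σ μ₁ : ℝ) (hσ : 0 < σ) (hμ₁ : 0 < μ₁) (hμ₁' : μ₁ < 2)
    {K : Set (EuclideanSpace ℝ (Fin n))} (hK : IsCompact K)
    (s : ℕ → EuclideanSpace ℝ (Fin n)) (hs : ∀ t, s t ∈ K)
    (D : ℕ → Finset (EuclideanSpace ℝ (Fin n)))
    (hD0 : D 0 = {s 0})
    (hDrec : ∀ t, D (t + 1) =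
      if ∃ x ∈ D t, 2 - 2 * Real.exp (-‖x - s (t + 1)‖ ^ 2 / (2 * σ ^ 2)) ≤ μ₁
      then D t
      else insert (s (t + 1)) (D t)) :
    (⋃ t, (D t : Set (EuclideanSpace ℝ (Fin n)))).Finite ∧
      ∃ T, ∀ t ≥ T, D t = D T :=
  mnc_gaussian_dictionary_finite_and_eventually_constant_general σ μ₁ hμ₁ hK s hs D hD0 hDrec
end
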